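/- Every instance of house allocation with existing tenants under dichotomous preferences admits an allocation that is simultaneously strongly individually rational, core stable, and maximizes the number of satisfied agents among all strongly individually rational allocations. -/

import Mathlib

/-- An instance of house allocation with existing tenants under dichotomous
preferences: an endowment function `ω` assigning each agent at most one house
(no house owned by two distinct agents), and for each agent `i` a set `A i`
of acceptable houses. -/
structure HAInstance (N H : Type*) where
  ω : N → Option H
  A : N → Set H
  ω_inj : ∀ i j : N, ∀ h : H, ω i = some h → ω j = some h → i = j

/-- An allocation assigns each agent at most one house, no two distinct agents
receiving the same house. -/
def IsAllocation {N H : Type*} (x : N → Option H) : Prop :=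
  ∀ i j : N, ∀ h : H, x i = some h → x j = some h → i = j

/-- Agent `i` is satisfied by `x` if he receives an acceptable house. -/
def Satisfied {N H : Type*} (M : HAInstance N H) (x : N → Option H) (i : N) : Prop :=
  ∃ h : H, x i = some h ∧ h ∈ M.A i

/-- The welfare of an allocation: the number of satisfied agents. -/
noncomputable def Welfare {N H : Type*} (M : HAInstance N H) (x : N → Option H) : ℕ :=
  Nat.card {i : N // Satisfied M x i}

/-- Individual rationality: every agent whose endowed house is acceptable to
him receives an acceptable house. -/
def IR {N H : Type*} (M : HAInstance N H) (x : N → Option H) : Prop :=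
  ∀ i : N, (∃ h : H, M.ω i = some h ∧ h ∈ M.A i) → Satisfied M x i

/-- Strong individual rationality: every agent either keeps his endowment or
receives an acceptable house while his endowment was unacceptable. -/
def SIR {N H : Type*} (M : HAInstance N H) (x : N → Option H) : Prop :=
  ∀ i : N, x i = M.ω i ∨
    (Satisfied M x i ∧ ¬ (∃ h : H, M.ω i = some h ∧ h ∈ M.A i))

/-- Coalition `S` blocks allocation `x`: there is an injective assignment `y`
on `S`, using only houses endowed by members of `S`, such that every member of
`S` gets an acceptable house under `y` while unsatisfied under `x`. -/
def Blocks {N H : Type*} (M : HAInstance N H) (x : N → Option H) (S : Set N) : Prop :=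
  S.Nonempty ∧ ∃ y : N → H, Set.InjOn y S ∧
    ∀ i ∈ S, (∃ j ∈ S, M.ω j = some (y i)) ∧ y i ∈ M.A i ∧ ¬ Satisfied M x i

/-- An allocation is core stable if no coalition blocks it. -/
def CoreStable {N H : Type*} (M : HAInstance N H) (x : N → Option H) : Prop :=
  ∀ S : Set N, ¬ Blocks M x S

/-- `y` Pareto dominates `x` if every agent satisfied by `x` is satisfied by
`y` and some agent is satisfied by `y` but not by `x`. -/
def ParetoDominates {N H : Type*} (M : HAInstance N H) (y x : N → Option H) : Prop :=
  (∀ i : N, Satisfied M x i → Satisfied M y i) ∧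
    ∃ i : N, Satisfied M y i ∧ ¬ Satisfied M x i

/-!
Take an S-IR allocation `x` of maximum welfare; it exists because welfare is bounded by the number
of agents. Members of a coalition blocking `x` are unsatisfied, so by strong individual rationality
they keep their endowments and their endowments are unacceptable to them. Letting the coalition
trade among itself therefore gives again an S-IR allocation, which satisfies strictly more agents
than `x`, contradicting maximality.
-/

section

variable {N H : Type*} {M : HAInstance N H}

theorem welfare_eq_ncard (M : HAInstance N H) (x : N → Option H) :
    Welfare M x = {i | Satisfied M x i}.ncard :=
  rfl

theorem exists_sir_welfare_maximizing [Finite N] (M : HAInstance N H) :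
    ∃ x : N → Option H, IsAllocation x ∧ SIR M x ∧
      ∀ y : N → Option H, IsAllocation y → SIR M y → Welfare M y ≤ Welfare M x := by
  set W : Set ℕ := {n | ∃ x, IsAllocation x ∧ SIR M x ∧ Welfare M x = n}
  have hW : W.Nonempty := ⟨_, M.ω, M.ω_inj, fun _ => Or.inl rfl, rfl⟩
  have hWbdd : BddAbove W := ⟨Nat.card N, by
    rintro _ ⟨x, -, -, rfl⟩
    exact Finite.card_subtype_le _⟩
  obtain ⟨x, hx, hxsir, hxW⟩ := Nat.sSup_mem hW hWbdd
  exact ⟨x, hx, hxsir, fun y hy hysir => hxW ▸ le_csSup hWbdd ⟨y, hy, hysir, rfl⟩⟩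

theorem ParetoDominates.welfare_lt [Finite N] {x y : N → Option H}
    (h : ParetoDominates M y x) : Welfare M x < Welfare M y := by
  obtain ⟨hle, i, hiy, hix⟩ := h
  rw [welfare_eq_ncard, welfare_eq_ncard]
  exact Set.ncard_lt_ncard ⟨hle, fun hsub => hix (hsub hiy)⟩

theorem IsAllocation.piecewise {x : N → Option H} {S : Set N} {y : N → H}
    [DecidablePred (· ∈ S)] (hx : IsAllocation x) (hy : Set.InjOn y S)
    (hyx : ∀ i ∈ S, ∃ j ∈ S, x j = some (y i)) :
    IsAllocation (S.piecewise (fun i => some (y i)) x) := by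
  have mixed : ∀ i ∈ S, ∀ j ∉ S, ∀ h, some (y i) = some h → x j ≠ some h := by
    rintro i hi j hj h hyi hxj
    obtain ⟨k, hk, hxk⟩ := hyx i hi
    exact hj (hx j k h hxj (hxk.trans hyi) ▸ hk)
  intro i j h hi hj
  by_cases hiS : i ∈ S <;> by_cases hjS : j ∈ S <;>
    simp only [Set.piecewise_eq_of_mem, Set.piecewise_eq_of_notMem, hiS, hjS,
      not_false_eq_true] at hi hj
  · exact hy hiS hjS (Option.some_injective _ (hi.trans hj.symm))
  · exact absurd hj (mixed i hiS j hjS h hi)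
  · exact absurd hi (mixed j hjS i hiS h hj)
  · exact hx i j h hi hj

theorem SIR.piecewise {x : N → Option H} {S : Set N} {y : N → H} [DecidablePred (· ∈ S)]
    (hx : SIR M x) (hyA : ∀ i ∈ S, y i ∈ M.A i)
    (hω : ∀ i ∈ S, ¬ ∃ h, M.ω i = some h ∧ h ∈ M.A i) :
    SIR M (S.piecewise (fun i => some (y i)) x) := by
  intro i
  by_cases hi : i ∈ S
  · exact Or.inr ⟨⟨y i, Set.piecewise_eq_of_mem _ _ _ hi, hyA i hi⟩, hω i hi⟩
  · simpa only [Satisfied, Set.piecewise_eq_of_notMem _ _ _ hi] using hx i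

theorem SIR.eq_endowment_of_not_satisfied {x : N → Option H} (hx : SIR M x) {i : N}
    (hi : ¬ Satisfied M x i) : x i = M.ω i :=
  (hx i).resolve_right fun h => hi h.1

theorem Blocks.exists_sir_paretoDominates {x : N → Option H} {S : Set N}
    (hx : IsAllocation x) (hxsir : SIR M x) (hS : Blocks M x S) :
    ∃ x' : N → Option H, IsAllocation x' ∧ SIR M x' ∧ ParetoDominates M x' x := by
  classical
  obtain ⟨⟨i₀, hi₀⟩, y, hyinj, hy⟩ := hS
  have hkeep : ∀ i ∈ S, x i = M.ω i := fun i hi =>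
    hxsir.eq_endowment_of_not_satisfied (hy i hi).2.2
  have hωA : ∀ i ∈ S, ¬ ∃ h, M.ω i = some h ∧ h ∈ M.A i := fun i hi ⟨h, hh, hhA⟩ =>
    (hy i hi).2.2 ⟨h, (hkeep i hi).trans hh, hhA⟩
  have hyx : ∀ i ∈ S, ∃ j ∈ S, x j = some (y i) := fun i hi => by
    obtain ⟨j, hj, hjω⟩ := (hy i hi).1
    exact ⟨j, hj, (hkeep j hj).trans hjω⟩
  refine ⟨S.piecewise (fun i => some (y i)) x, hx.piecewise hyinj hyx,
    hxsir.piecewise (fun i hi => (hy i hi).2.1) hωA, fun i hi => ?_,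
    i₀, ⟨y i₀, Set.piecewise_eq_of_mem _ _ _ hi₀, (hy i₀ hi₀).2.1⟩, (hy i₀ hi₀).2.2⟩
  have hiS : i ∉ S := fun hiS => (hy i hiS).2.2 hi
  simpa only [Satisfied, Set.piecewise_eq_of_notMem _ _ _ hiS] using hi

end

theorem exists_sir_core_stable_welfare_maximizing_general {N H : Type*}
    [Fintype N] (M : HAInstance N H) :
    ∃ x : N → Option H, IsAllocation x ∧ SIR M x ∧ CoreStable M x ∧
      ∀ y : N → Option H, IsAllocation y → SIR M y →
        Welfare M y ≤ Welfare M x := by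
  obtain ⟨x, hx, hxsir, hmax⟩ := exists_sir_welfare_maximizing M
  refine ⟨x, hx, hxsir, fun S hS => ?_, hmax⟩
  obtain ⟨x', hx', hx'sir, hdom⟩ := hS.exists_sir_paretoDominates hx hxsir
  exact (hmax x' hx' hx'sir).not_gt hdom.welfare_lt

/-- Every instance admits an allocation that is S-IR, core
stable, and welfare-maximizing among S-IR allocations. -/
theorem exists_sir_core_stable_welfare_maximizing {N H : Type*}
    [Fintype N] [Fintype H] (M : HAInstance N H) :
    ∃ x : N → Option H, IsAllocation x ∧ SIR M x ∧ CoreStable M x ∧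
      ∀ y : N → Option H, IsAllocation y → SIR M y →
        Welfare M y ≤ Welfare M x :=
  exists_sir_core_stable_welfare_maximizing_general M
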